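/- Let X be a separable Hilbert space, e^{tA} a C₀-semigroup, Q self-adjoint nonnegative with Q_∞ x = ∫_0^∞ e^{sA}Qe^{sA*}x ds convergent, satisfying the Lyapunov equation. Then e^{tA} maps H_∞ = Q_∞^{1/2}(X) into itself and ‖Q_∞^{-1/2} e^{tA} Q_∞^{1/2}‖_{L(X)} ≤ 1 for all t > 0; i.e., the restriction S_∞(t) of e^{tA} to H_∞ is a contraction semigroup on H_∞. -/

import Mathlib

/-!
With `R = Q_∞^{1/2}`, the integral formula gives
`‖R S(t)* z‖² = ⟪Q_∞ S(t)* z, S(t)* z⟫ = ∫_t^∞ ⟪Q S(s)* z, S(s)* z⟫ ds ≤ ‖R z‖²`.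
Douglas' range-inclusion argument dualises this bound: for `v = S(t) R x` the functional
`R z ↦ ⟪v, z⟫` is well defined on the range of `R` and has norm at most `‖x‖`, so a
Hahn–Banach extension, represented by Riesz, is a vector `y` with `R y = v` and `‖y‖ ≤ ‖x‖`.
-/

open MeasureTheory
open scoped RealInnerProductSpace

section Douglas

variable {𝕜 E F : Type*} [RCLike 𝕜]
  [NormedAddCommGroup E] [InnerProductSpace 𝕜 E]
  [NormedAddCommGroup F] [InnerProductSpace 𝕜 F] [CompleteSpace F]

theorem LinearMap.exists_inner_apply_eq_of_norm_inner_le (T : E →ₗ[𝕜] F) {v : E} {c : ℝ}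
    (hc : 0 ≤ c) (h : ∀ z, ‖inner 𝕜 v z‖ ≤ c * ‖T z‖) :
    ∃ y, (∀ z, inner 𝕜 y (T z) = inner 𝕜 v z) ∧ ‖y‖ ≤ c := by
  have hker : LinearMap.ker T ≤ LinearMap.ker (innerₛₗ 𝕜 v) := fun z hz => by
    rw [LinearMap.mem_ker] at hz ⊢
    simpa [hz] using h z
  let ℓ : LinearMap.range T →ₗ[𝕜] 𝕜 :=
    ((LinearMap.ker T).liftQ (innerₛₗ 𝕜 v) hker).comp T.quotKerEquivRange.symm.toLinearMap
  have hℓ : ∀ z, ℓ ⟨T z, LinearMap.mem_range_self T z⟩ = inner 𝕜 v z := fun z => by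
    have : (⟨T z, LinearMap.mem_range_self T z⟩ : LinearMap.range T) =
        T.quotKerEquivRange (Submodule.Quotient.mk z) := rfl
    simp [ℓ, this]
  have hℓc : ∀ u, ‖ℓ u‖ ≤ c * ‖u‖ := by
    rintro ⟨_, z, rfl⟩
    rw [hℓ]
    exact h z
  obtain ⟨G, hG, hGnorm⟩ := exists_extension_norm_eq _ (ℓ.mkContinuous c hℓc)
  refine ⟨(InnerProductSpace.toDual 𝕜 F).symm G, fun z => ?_, ?_⟩
  · rw [InnerProductSpace.toDual_symm_apply]
    exact (hG ⟨T z, LinearMap.mem_range_self T z⟩).trans (hℓ z)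
  · rw [LinearIsometryEquiv.norm_map, hGnorm]
    exact LinearMap.mkContinuous_norm_le _ hc _

variable [CompleteSpace E]

theorem ContinuousLinearMap.exists_adjoint_apply_eq_of_norm_inner_le (T : E →L[𝕜] F) {v : E}
    {c : ℝ} (hc : 0 ≤ c) (h : ∀ z, ‖inner 𝕜 v z‖ ≤ c * ‖T z‖) :
    ∃ y, adjoint T y = v ∧ ‖y‖ ≤ c := by
  obtain ⟨y, hy, hyc⟩ := (T : E →ₗ[𝕜] F).exists_inner_apply_eq_of_norm_inner_le hc h
  exact ⟨y, ext_inner_right 𝕜 fun z => (adjoint_inner_left T z y).trans (hy z), hyc⟩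

theorem ContinuousLinearMap.exists_apply_adjoint_eq_adjoint_of_norm_le (T : E →L[𝕜] F)
    (B : E →L[𝕜] E) (hB : ∀ z, ‖T (adjoint B z)‖ ≤ ‖T z‖) (x : F) :
    ∃ y, B (adjoint T x) = adjoint T y ∧ ‖y‖ ≤ ‖x‖ := by
  obtain ⟨y, hy, hyx⟩ := T.exists_adjoint_apply_eq_of_norm_inner_le (v := B (adjoint T x))
    (norm_nonneg x) fun z => by
      rw [← adjoint_inner_right, adjoint_inner_left]
      exact (norm_inner_le_norm x _).trans (mul_le_mul_of_nonneg_left (hB z) (norm_nonneg x))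
  exact ⟨y, hy.symm, hyx⟩

end Douglas

theorem setIntegral_Ioi_comp_add_right {E : Type*} [NormedAddCommGroup E] [NormedSpace ℝ E]
    (g : ℝ → E) (a t : ℝ) : ∫ s in Set.Ioi a, g (s + t) = ∫ s in Set.Ioi (a + t), g s := by
  have := (measurePreserving_add_right volume t).setIntegral_preimage_emb
    (measurableEmbedding_addRight t) g (Set.Ioi (a + t))
  rwa [Set.preimage_add_const_Ioi, add_sub_cancel_right] at this

section Lyapunov

variable {X : Type*} [NormedAddCommGroup X] [InnerProductSpace ℝ X] [CompleteSpace X]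
  {Q Qinf : X →L[ℝ] X}

open ContinuousLinearMap

theorem inner_apply_apply_adjoint (A : X →L[ℝ] X) (x : X) :
    ⟪x, A (Q (adjoint A x))⟫ = ⟪Q (adjoint A x), adjoint A x⟫ := by
  rw [← adjoint_inner_left, real_inner_comm]

theorem inner_apply_self_eq_integral {α : Type*} [MeasurableSpace α] {μ : Measure α}
    {S : α → X →L[ℝ] X} {x : X} (hint : Integrable (fun s => S s (Q (adjoint (S s) x))) μ)
    (hQinf : Qinf x = ∫ s, S s (Q (adjoint (S s) x)) ∂μ) :
    ⟪Qinf x, x⟫ = ∫ s, ⟪Q (adjoint (S s) x), adjoint (S s) x⟫ ∂μ := by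
  rw [real_inner_comm, hQinf, ← integral_inner hint]
  exact integral_congr_ae (ae_of_all _ fun s => inner_apply_apply_adjoint (S s) x)

theorem inner_apply_adjoint_le {S : ℝ → X →L[ℝ] X}
    (hSsem : ∀ t s : ℝ, 0 ≤ t → 0 ≤ s → S (t + s) = (S t).comp (S s))
    (hQpos : ∀ x, 0 ≤ ⟪Q x, x⟫)
    (hint : ∀ x, IntegrableOn (fun s => S s (Q (adjoint (S s) x))) (Set.Ioi 0))
    (hQinf : ∀ x, Qinf x = ∫ s in Set.Ioi (0 : ℝ), S s (Q (adjoint (S s) x)))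
    {t : ℝ} (ht : 0 ≤ t) (x : X) :
    ⟪Qinf (adjoint (S t) x), adjoint (S t) x⟫ ≤ ⟪Qinf x, x⟫ := by
  set q : ℝ → ℝ := fun s => ⟪Q (adjoint (S s) x), adjoint (S s) x⟫
  have hshift : ∀ s ∈ Set.Ioi (0 : ℝ), adjoint (S s) (adjoint (S t) x) = adjoint (S (s + t)) x :=
    fun s hs => by rw [add_comm, hSsem t s ht (le_of_lt hs), adjoint_comp, comp_apply]
  have hq_int : IntegrableOn q (Set.Ioi 0) :=
    ((innerSL ℝ x).integrable_comp (hint x)).congr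
      (ae_of_all _ fun s => inner_apply_apply_adjoint (S s) x)
  calc ⟪Qinf (adjoint (S t) x), adjoint (S t) x⟫
      = ∫ s in Set.Ioi 0, q (s + t) := by
        rw [inner_apply_self_eq_integral (hint _) (hQinf _)]
        exact setIntegral_congr_fun measurableSet_Ioi fun s hs => by simp only [q, hshift s hs]
    _ = ∫ s in Set.Ioi t, q s := by rw [setIntegral_Ioi_comp_add_right, zero_add]
    _ ≤ ∫ s in Set.Ioi 0, q s :=
        setIntegral_mono_set hq_int (ae_of_all _ fun s => hQpos _)
          (Set.Ioi_subset_Ioi ht).eventuallyLE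
    _ = ⟪Qinf x, x⟫ := (inner_apply_self_eq_integral (hint x) (hQinf x)).symm

end Lyapunov

theorem stmt19_general {X : Type*} [NormedAddCommGroup X] [InnerProductSpace ℝ X]
    [CompleteSpace X]
    (S : ℝ → X →L[ℝ] X)
    (hSsem : ∀ t s : ℝ, 0 ≤ t → 0 ≤ s → S (t + s) = (S t).comp (S s))
    (Q : X →L[ℝ] X) (hQpos : ∀ x : X, 0 ≤ ⟪Q x, x⟫)
    (Qinf : X →L[ℝ] X)
    (hint : ∀ x : X, IntegrableOn
      (fun s => S s (Q (ContinuousLinearMap.adjoint (S s) x))) (Set.Ioi 0))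
    (hQinf : ∀ x : X, Qinf x
      = ∫ s in Set.Ioi (0:ℝ), S s (Q (ContinuousLinearMap.adjoint (S s) x)))
    (Rinf : X →L[ℝ] X) (hRsa : IsSelfAdjoint Rinf)
    (hRsq : Rinf.comp Rinf = Qinf) :
    ∀ t > (0:ℝ), ∀ x : X, ∃ y : X, S t (Rinf x) = Rinf y ∧ ‖y‖ ≤ ‖x‖ := by
  intro t ht x
  have hRadj : ContinuousLinearMap.adjoint Rinf = Rinf := hRsa.adjoint_eq
  have hRnorm : ∀ w, ‖Rinf w‖ ^ 2 = ⟪Qinf w, w⟫ := fun w => by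
    rw [ContinuousLinearMap.apply_norm_sq_eq_inner_adjoint_left, hRadj, hRsq, RCLike.re_to_real]
  have hcontr : ∀ z, ‖Rinf (ContinuousLinearMap.adjoint (S t) z)‖ ≤ ‖Rinf z‖ := fun z => by
    rw [← pow_le_pow_iff_left₀ (norm_nonneg _) (norm_nonneg _) two_ne_zero, hRnorm, hRnorm]
    exact inner_apply_adjoint_le hSsem hQpos hint hQinf ht.le z
  simpa only [hRadj] using Rinf.exists_apply_adjoint_eq_adjoint_of_norm_le (S t) hcontr x

/-- `e^{tA}` maps `H_∞ = Q_∞^{1/2}(X)` into itself and the restriction is a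
contraction: `‖Q_∞^{-1/2} e^{tA} Q_∞^{1/2}‖ ≤ 1` for all `t > 0`; here this is
expressed as: for every `x` there is `y` with `e^{tA}(Q_∞^{1/2}x) = Q_∞^{1/2}y`
and `‖y‖ ≤ ‖x‖`. -/
theorem stmt19 {X : Type*} [NormedAddCommGroup X] [InnerProductSpace ℝ X]
    [CompleteSpace X] [TopologicalSpace.SeparableSpace X]
    (S : ℝ → X →L[ℝ] X) (hS0 : S 0 = 1)
    (hSsem : ∀ t s : ℝ, 0 ≤ t → 0 ≤ s → S (t + s) = (S t).comp (S s))
    (hScont : ∀ x : X, Continuous fun t => S t x)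
    (Q : X →L[ℝ] X) (hQsa : IsSelfAdjoint Q) (hQpos : ∀ x : X, 0 ≤ ⟪Q x, x⟫)
    (Qinf : X →L[ℝ] X)
    (hint : ∀ x : X, IntegrableOn
      (fun s => S s (Q (ContinuousLinearMap.adjoint (S s) x))) (Set.Ioi 0))
    (hQinf : ∀ x : X, Qinf x
      = ∫ s in Set.Ioi (0:ℝ), S s (Q (ContinuousLinearMap.adjoint (S s) x)))
    (Rinf : X →L[ℝ] X) (hRsa : IsSelfAdjoint Rinf)
    (hRpos : ∀ x : X, 0 ≤ ⟪Rinf x, x⟫) (hRsq : Rinf.comp Rinf = Qinf) :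
    ∀ t > (0:ℝ), ∀ x : X, ∃ y : X, S t (Rinf x) = Rinf y ∧ ‖y‖ ≤ ‖x‖ :=
  stmt19_general S hSsem Q hQpos Qinf hint hQinf Rinf hRsa hRsq
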